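/- Let d ≥ 1 and let N = (n_1,…,n_d) be a d-tuple of positive integers. For every complex s with Re(s²) > 0, ∑_{Λ_K ≠ 0} log(s² + Λ_K) = V(N) · 𝓘_d(s) + 𝓗_N(s), where the sum runs over the nonzero eigenvalues Λ_K, log denotes the principal branch of the complex logarithm, 𝓘_d(s) = −∫_0^∞ (e^{−s²t} e^{−2dt} I_0(2t)^d − e^{−t}) dt/t, and 𝓗_N(s) = −∫_0^∞ (e^{−s²t}[θ_N(t) − V(N) e^{−2dt} I_0(2t)^d − 1] + e^{−t}) dt/t. -/

import Mathlib

open MeasureTheory Real Filter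

/-- The modified `I`-Bessel function of integer order `x`, via its integral
representation `I_x(t) = (1/π) ∫_0^π e^{t cos θ} cos(xθ) dθ`. -/
noncomputable def besselI (x : ℤ) (t : ℝ) : ℝ :=
  (1 / Real.pi) * ∫ θ in (0:ℝ)..Real.pi, Real.exp (t * Real.cos θ) * Real.cos ((x : ℝ) * θ)

/-- Eigenvalues of the combinatorial Laplacian on the discrete torus determined by `N`. -/
noncomputable def Lam (d : ℕ) (N : Fin d → ℕ) (K : (j : Fin d) → Fin (N j)) : ℝ :=
  2 * d - ∑ j, 2 * Real.cos (2 * Real.pi * (K j : ℝ) / (N j : ℝ))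

/-- The theta function (heat trace) of the discrete torus determined by `N`. -/
noncomputable def discTheta (d : ℕ) (N : Fin d → ℕ) (t : ℝ) : ℝ :=
  ∑ K : ((j : Fin d) → Fin (N j)), Real.exp (-(Lam d N K) * t)

/-- The function `𝓘_d(s)` (complex Gauss transform version). -/
noncomputable def mathcalI (d : ℕ) (s : ℂ) : ℂ :=
  -∫ t in Set.Ioi (0:ℝ),
    (Complex.exp (-s ^ 2 * (t : ℂ)) * ((Real.exp (-(2 * d * t)) : ℝ) : ℂ) *
        ((besselI 0 (2 * t) : ℝ) : ℂ) ^ d - ((Real.exp (-t) : ℝ) : ℂ)) / (t : ℂ)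

/-- The function `𝓗_N(s)`. -/
noncomputable def mathcalH (d : ℕ) (N : Fin d → ℕ) (s : ℂ) : ℂ :=
  -∫ t in Set.Ioi (0:ℝ),
    (Complex.exp (-s ^ 2 * (t : ℂ)) *
        (((discTheta d N t : ℝ) : ℂ) - ((∏ j, (N j : ℝ)) : ℝ) *
          ((Real.exp (-(2 * d * t)) : ℝ) : ℂ) * ((besselI 0 (2 * t) : ℝ) : ℂ) ^ d - 1)
      + ((Real.exp (-t) : ℝ) : ℂ)) / (t : ℂ)

/-!
For `Re z > 0` the principal logarithm is a Frullani integral,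
`log z = ∫₀^∞ (e^{-t} - e^{-zt}) dt / t`: write `log z = ∫₀¹ (z - 1) / (1 + u (z - 1)) du`,
expand `1 / w = ∫₀^∞ e^{-wt} dt` (the points `w` of the segment `[1, z]` have
`Re w ≥ min 1 (Re z)`) and swap the two integrals. Applied to `z = s² + Λ_K` and summed over the
nonzero eigenvalues, the integrand becomes `((V(N) - 1) e^{-t} - e^{-s²t} (θ_N(t) - 1)) / t`,
which is pointwise minus `V(N)` times the integrand of `𝓘_d(s)` minus the integrand of
`𝓗_N(s)`. The integrand of `𝓘_d(s)` is integrable because `e^{-2t} ≤ I_0(2t) ≤ e^{2t}` gives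
`|e^{-2dt} I_0(2t)^d - 1| ≤ 4dt`; the integrand of `𝓗_N(s)` is then integrable as a difference.
-/

open Set

section Frullani

noncomputable def frullaniIntegrand (z : ℂ) (t : ℝ) : ℂ :=
  (Complex.exp (-t) - Complex.exp (-z * t)) / t

noncomputable def segmentKernel (z : ℂ) (t u : ℝ) : ℂ :=
  (z - 1) * Complex.exp (-(1 + u * (z - 1)) * t)

variable {z : ℂ}

lemma min_one_re_le_re_one_add_mul_sub_one {u : ℝ} (hu₀ : 0 ≤ u) (hu₁ : u ≤ 1) :
    min 1 z.re ≤ (1 + u * (z - 1)).re := by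
  have hre : (1 + u * (z - 1)).re = (1 - u) * 1 + u * z.re := by simp; ring
  rw [hre]
  nlinarith [min_le_left 1 z.re, min_le_right 1 z.re]

lemma norm_segmentKernel_le {u t : ℝ} (hu₀ : 0 ≤ u) (hu₁ : u ≤ 1) (ht : 0 ≤ t) :
    ‖segmentKernel z t u‖ ≤ ‖z - 1‖ * rexp (-min 1 z.re * t) := by
  rw [segmentKernel, norm_mul, Complex.norm_exp]
  gcongr
  have hre : (-(1 + u * (z - 1)) * t).re = -(1 + u * (z - 1)).re * t := by simp
  rw [hre]
  nlinarith [min_one_re_le_re_one_add_mul_sub_one (z := z) hu₀ hu₁]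

lemma integrable_segmentKernel (hz : 0 < z.re) :
    Integrable (Function.uncurry (segmentKernel z))
      ((volume.restrict (Ioi 0)).prod (volume.restrict (Ioc 0 1))) := by
  have hc : 0 < min 1 z.re := lt_min one_pos hz
  refine Integrable.mono' (g := fun p : ℝ × ℝ => ‖z - 1‖ * rexp (-min 1 z.re * p.1) * 1)
    (((exp_neg_integrableOn_Ioi 0 hc).const_mul _).mul_prod (integrable_const 1))
    (by unfold segmentKernel Function.uncurry; fun_prop) ?_
  rw [Measure.prod_restrict]
  filter_upwards [ae_restrict_mem (measurableSet_Ioi.prod measurableSet_Ioc)]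
    with ⟨t, u⟩ ⟨ht, hu⟩
  rw [mul_one]
  exact norm_segmentKernel_le hu.1.le hu.2 (le_of_lt ht)

lemma frullaniIntegrand_eq_integral_segmentKernel (z : ℂ) {t : ℝ} (ht : t ≠ 0) :
    frullaniIntegrand z t = ∫ u in (0:ℝ)..1, segmentKernel z t u := by
  have ht' : (t : ℂ) ≠ 0 := by exact_mod_cast ht
  have hderiv (u : ℝ) : HasDerivAt (fun u : ℝ => -Complex.exp (-(1 + u * (z - 1)) * t) / t)
      (segmentKernel z t u) u := by
    have hlin : HasDerivAt (fun w : ℂ => -(1 + w * (z - 1)) * t) (-(z - 1) * t) u := by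
      simpa using
        (((hasDerivAt_id (u : ℂ)).mul_const (z - 1)).const_add 1).neg.mul_const (t : ℂ)
    refine (hlin.cexp.neg.div_const (t : ℂ)).comp_ofReal.congr_deriv ?_
    rw [segmentKernel]
    field_simp
  rw [intervalIntegral.integral_eq_sub_of_hasDerivAt (fun u _ => hderiv u)
    (Continuous.intervalIntegrable (by unfold segmentKernel; fun_prop) _ _), frullaniIntegrand]
  push_cast
  ring_nf

lemma integrableOn_frullaniIntegrand (hz : 0 < z.re) :
    IntegrableOn (frullaniIntegrand z) (Ioi 0) := by
  refine (integrable_segmentKernel hz).integral_prod_left.congr ?_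
  filter_upwards [ae_restrict_mem measurableSet_Ioi] with t ht
  rw [frullaniIntegrand_eq_integral_segmentKernel z (ne_of_gt ht),
    intervalIntegral.integral_of_le zero_le_one]
  rfl

lemma log_eq_integral_frullaniIntegrand (hz : 0 < z.re) :
    Complex.log z = ∫ t in Ioi (0:ℝ), frullaniIntegrand z t := by
  have hc : 0 < min 1 z.re := lt_min one_pos hz
  have hre {u : ℝ} (hu : u ∈ Icc (0:ℝ) 1) : 0 < (1 + u * (z - 1)).re :=
    hc.trans_le (min_one_re_le_re_one_add_mul_sub_one hu.1 hu.2)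
  have hlog : Complex.log z = ∫ u in Ioc (0:ℝ) 1, (z - 1) / (1 + u * (z - 1)) := by
    have hderiv (u : ℝ) (hu : u ∈ uIcc (0:ℝ) 1) : HasDerivAt
        (fun u : ℝ => Complex.log (1 + u * (z - 1))) ((z - 1) / (1 + u * (z - 1))) u := by
      rw [uIcc_of_le zero_le_one] at hu
      have hlin : HasDerivAt (fun w : ℂ => 1 + w * (z - 1)) (z - 1) u := by
        simpa using ((hasDerivAt_id (u : ℂ)).mul_const (z - 1)).const_add 1
      exact hlin.comp_ofReal.clog_real (Or.inl (hre hu))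
    rw [← intervalIntegral.integral_of_le zero_le_one,
      intervalIntegral.integral_eq_sub_of_hasDerivAt hderiv]
    · simp
    · refine ContinuousOn.intervalIntegrable (continuousOn_const.div (by fun_prop) ?_)
      intro u hu
      rw [uIcc_of_le zero_le_one] at hu
      exact fun h => (hre hu).ne' (by rw [h, Complex.zero_re])
  have hinner {u : ℝ} (hu : u ∈ Ioc (0:ℝ) 1) :
      (z - 1) / (1 + u * (z - 1)) = ∫ t in Ioi (0:ℝ), segmentKernel z t u := by
    have hw := hre (Ioc_subset_Icc_self hu)
    simp only [segmentKernel]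
    rw [integral_const_mul, integral_exp_mul_complex_Ioi (by rw [Complex.neg_re]; linarith)]
    simp only [Complex.ofReal_zero, mul_zero, Complex.exp_zero, neg_div_neg_eq, mul_one_div]
  rw [hlog, setIntegral_congr_fun measurableSet_Ioc fun u hu => hinner hu,
    ← integral_integral_swap (integrable_segmentKernel hz)]
  refine setIntegral_congr_fun measurableSet_Ioi fun t ht => ?_
  rw [frullaniIntegrand_eq_integral_segmentKernel z (ne_of_gt ht),
    intervalIntegral.integral_of_le zero_le_one]

end Frullani

section Spectrum

variable {d : ℕ} {N : Fin d → ℕ}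

lemma Lam_eq_sum (K : (j : Fin d) → Fin (N j)) :
    Lam d N K = ∑ j, (2 - 2 * cos (2 * π * (K j : ℝ) / (N j : ℝ))) := by
  simp [Lam, Finset.sum_sub_distrib, mul_comm]

lemma Lam_nonneg (K : (j : Fin d) → Fin (N j)) : 0 ≤ Lam d N K := by
  rw [Lam_eq_sum]
  exact Finset.sum_nonneg fun j _ => by linarith [cos_le_one (2 * π * (K j : ℝ) / (N j : ℝ))]

lemma cos_two_pi_mul_div_eq_one_iff {k n : ℕ} (hk : k < n) :
    cos (2 * π * k / n) = 1 ↔ k = 0 := by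
  have hn : (0 : ℝ) < n := by exact_mod_cast (Nat.zero_le k).trans_lt hk
  have hkn : (k : ℝ) / n < 1 := by rw [div_lt_one hn]; exact_mod_cast hk
  have hk0 : (0 : ℝ) ≤ k / n := by positivity
  rw [mul_div_assoc, cos_eq_one_iff_of_lt_of_lt (by nlinarith [pi_pos]) (by nlinarith [pi_pos])]
  simp [pi_ne_zero, hn.ne']

lemma Lam_eq_zero_iff (K : (j : Fin d) → Fin (N j)) :
    Lam d N K = 0 ↔ ∀ j, (K j : ℕ) = 0 := by
  rw [Lam_eq_sum, Finset.sum_eq_zero_iff_of_nonneg fun j _ => by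
    linarith [cos_le_one (2 * π * (K j : ℝ) / (N j : ℝ))]]
  simp only [Finset.mem_univ, true_implies, ← cos_two_pi_mul_div_eq_one_iff (K _).2]
  exact forall_congr' fun j => by constructor <;> intro h <;> linarith

lemma filter_Lam_ne_zero_eq_erase (hN : ∀ j, 0 < N j) :
    Finset.univ.filter (fun K => Lam d N K ≠ 0) = Finset.univ.erase fun j => ⟨0, hN j⟩ := by
  ext K
  simp [Lam_eq_zero_iff, funext_iff, Fin.ext_iff]

lemma card_filter_Lam_ne_zero (hN : ∀ j, 0 < N j) :
    ((Finset.univ.filter fun K => Lam d N K ≠ 0).card : ℝ) = ∏ j, (N j : ℝ) - 1 := by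
  have h := Finset.card_erase_add_one (Finset.mem_univ fun j => (⟨0, hN j⟩ : Fin (N j)))
  rw [Finset.card_univ, Fintype.card_pi] at h
  rw [filter_Lam_ne_zero_eq_erase hN, eq_sub_iff_add_eq]
  simpa using congrArg (Nat.cast : ℕ → ℝ) h

lemma discTheta_eq_one_add_sum (hN : ∀ j, 0 < N j) (t : ℝ) :
    discTheta d N t
      = 1 + ∑ K ∈ Finset.univ.filter (fun K => Lam d N K ≠ 0), rexp (-Lam d N K * t) := by
  have hLam : Lam d N (fun j => ⟨0, hN j⟩) = 0 := (Lam_eq_zero_iff _).2 fun _ => rfl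
  rw [filter_Lam_ne_zero_eq_erase hN, discTheta,
    ← Finset.add_sum_erase _ _ (Finset.mem_univ fun j => (⟨0, hN j⟩ : Fin (N j))), hLam]
  simp

end Spectrum

section Bessel

lemma continuous_besselI (x : ℤ) : Continuous (besselI x) :=
  continuous_const.mul <| intervalIntegral.continuous_parametric_intervalIntegral_of_continuous'
    (by fun_prop) 0 π

lemma besselI_zero_eq (t : ℝ) :
    besselI 0 t = π⁻¹ * ∫ θ in (0:ℝ)..π, rexp (t * cos θ) := by
  simp [besselI]

lemma abs_mul_cos_le_abs (t θ : ℝ) : |t * cos θ| ≤ |t| := by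
  rw [abs_mul]
  exact mul_le_of_le_one_right (abs_nonneg t) (abs_cos_le_one θ)

lemma exp_neg_abs_le_besselI_zero (t : ℝ) : rexp (-|t|) ≤ besselI 0 t := by
  have hmono : ∫ _ in (0:ℝ)..π, rexp (-|t|) ≤ ∫ θ in (0:ℝ)..π, rexp (t * cos θ) :=
    intervalIntegral.integral_mono_on pi_pos.le intervalIntegrable_const
      (Continuous.intervalIntegrable (by fun_prop) _ _) fun θ _ =>
        exp_le_exp.2 (neg_le_of_abs_le (abs_mul_cos_le_abs t θ))
  rw [intervalIntegral.integral_const, smul_eq_mul, sub_zero] at hmono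
  rwa [besselI_zero_eq, le_inv_mul_iff₀ pi_pos]

lemma besselI_zero_le_exp_abs (t : ℝ) : besselI 0 t ≤ rexp |t| := by
  have hmono : ∫ θ in (0:ℝ)..π, rexp (t * cos θ) ≤ ∫ _ in (0:ℝ)..π, rexp |t| :=
    intervalIntegral.integral_mono_on pi_pos.le
      (Continuous.intervalIntegrable (by fun_prop) _ _) intervalIntegrable_const fun θ _ =>
        exp_le_exp.2 (le_of_abs_le (abs_mul_cos_le_abs t θ))
  rw [intervalIntegral.integral_const, smul_eq_mul, sub_zero] at hmono
  rwa [besselI_zero_eq, inv_mul_le_iff₀ pi_pos]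

lemma abs_exp_mul_besselI_zero_pow_sub_one_le (d : ℕ) {t : ℝ} (ht : 0 ≤ t) :
    |rexp (-(2 * d * t)) * besselI 0 (2 * t) ^ d - 1| ≤ 4 * d * t := by
  have habs : |2 * t| = 2 * t := abs_of_nonneg (by positivity)
  have hlow := exp_neg_abs_le_besselI_zero (2 * t)
  have hupp := besselI_zero_le_exp_abs (2 * t)
  rw [habs] at hlow hupp
  have hpow_low : rexp (-(2 * d * t)) ≤ besselI 0 (2 * t) ^ d := by
    rw [show -(2 * d * t) = d * -(2 * t) by ring, exp_nat_mul]
    gcongr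
  have hpow_upp : besselI 0 (2 * t) ^ d ≤ rexp (2 * d * t) := by
    rw [show 2 * d * t = d * (2 * t) by ring, exp_nat_mul]
    gcongr
    exact (exp_pos _).le.trans hlow
  have hle : rexp (-(2 * d * t)) * besselI 0 (2 * t) ^ d ≤ 1 := by
    calc _ ≤ rexp (-(2 * d * t)) * rexp (2 * d * t) := by gcongr
      _ = 1 := by rw [← exp_add]; simp
  have hge : 1 - 4 * d * t ≤ rexp (-(2 * d * t)) * besselI 0 (2 * t) ^ d := by
    calc 1 - 4 * d * t ≤ rexp (-(4 * d * t)) := by linarith [add_one_le_exp (-(4 * d * t))]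
      _ = rexp (-(2 * d * t)) * rexp (-(2 * d * t)) := by rw [← exp_add]; ring_nf
      _ ≤ _ := by gcongr
  rw [abs_sub_comm, abs_of_nonneg (by linarith)]
  linarith

end Bessel

section Integrands

variable (d : ℕ) (N : Fin d → ℕ) (s : ℂ)

noncomputable def integrandI (t : ℝ) : ℂ :=
  (Complex.exp (-s ^ 2 * (t : ℂ)) * ((Real.exp (-(2 * d * t)) : ℝ) : ℂ) *
      ((besselI 0 (2 * t) : ℝ) : ℂ) ^ d - ((Real.exp (-t) : ℝ) : ℂ)) / (t : ℂ)

noncomputable def integrandH (t : ℝ) : ℂ :=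
  (Complex.exp (-s ^ 2 * (t : ℂ)) *
      (((discTheta d N t : ℝ) : ℂ) - ((∏ j, (N j : ℝ)) : ℝ) *
        ((Real.exp (-(2 * d * t)) : ℝ) : ℂ) * ((besselI 0 (2 * t) : ℝ) : ℂ) ^ d - 1)
    + ((Real.exp (-t) : ℝ) : ℂ)) / (t : ℂ)

lemma mathcalI_eq_integral_integrandI :
    mathcalI d s = -∫ t in Ioi (0:ℝ), integrandI d s t := rfl

lemma mathcalH_eq_integral_integrandH :
    mathcalH d N s = -∫ t in Ioi (0:ℝ), integrandH d N s t := rfl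

variable {d N s}

lemma integrableOn_integrandI (hs : 0 < (s ^ 2).re) : IntegrableOn (integrandI d s) (Ioi 0) := by
  have hsplit : integrandI d s = fun t : ℝ =>
      Complex.exp (-s ^ 2 * t) * ((rexp (-(2 * d * t)) * besselI 0 (2 * t) ^ d - 1 : ℝ) / t)
        - frullaniIntegrand (s ^ 2) t := by
    ext t
    simp only [integrandI, frullaniIntegrand]
    push_cast
    ring
  have hbound : IntegrableOn (fun t : ℝ => 4 * d * rexp (-(s ^ 2).re * t)) (Ioi 0) :=
    (integrableOn_exp_mul_Ioi (by linarith) 0).const_mul _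
  rw [hsplit]
  refine Integrable.sub (hbound.mono' ?_ ?_) (integrableOn_frullaniIntegrand hs)
  · have := (continuous_besselI 0).measurable
    exact Measurable.aestronglyMeasurable (by fun_prop)
  · filter_upwards [ae_restrict_mem measurableSet_Ioi] with t (ht : 0 < t)
    rw [norm_mul, Complex.norm_exp, norm_div, Complex.norm_real, Complex.norm_real,
      Real.norm_eq_abs, Real.norm_eq_abs, abs_of_pos ht, mul_comm]
    gcongr
    · rw [div_le_iff₀ ht]
      exact abs_exp_mul_besselI_zero_pow_sub_one_le d ht.le
    · simp

lemma sum_frullaniIntegrand_eq (hN : ∀ j, 0 < N j) (t : ℝ) :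
    ∑ K ∈ Finset.univ.filter (fun K => Lam d N K ≠ 0), frullaniIntegrand (s ^ 2 + Lam d N K) t
      = -((∏ j, (N j : ℝ) : ℝ) * integrandI d s t + integrandH d N s t) := by
  have hexp (K : (j : Fin d) → Fin (N j)) : Complex.exp (-(s ^ 2 + (Lam d N K : ℂ)) * t)
      = Complex.exp (-s ^ 2 * t) * (rexp (-Lam d N K * t) : ℝ) := by
    rw [Complex.ofReal_exp, ← Complex.exp_add]
    push_cast
    ring_nf
  have hcard := card_filter_Lam_ne_zero hN
  have htheta := discTheta_eq_one_add_sum hN t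
  simp only [frullaniIntegrand, hexp, ← Finset.sum_div, Finset.sum_sub_distrib,
    Finset.sum_const, nsmul_eq_mul, ← Finset.mul_sum, ← Complex.ofReal_sum]
  rw [integrandI, integrandH, htheta, ← Complex.ofReal_natCast, hcard]
  push_cast
  ring

end Integrands

theorem log_det_identity_general (d : ℕ) (N : Fin d → ℕ)
    (hN : ∀ j, 0 < N j) (s : ℂ) (hs : 0 < (s ^ 2).re) :
    ∑ K ∈ Finset.univ.filter (fun K : (j : Fin d) → Fin (N j) => Lam d N K ≠ 0),
        Complex.log (s ^ 2 + ((Lam d N K : ℝ) : ℂ))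
      = ((∏ j, (N j : ℝ) : ℝ) : ℂ) * mathcalI d s + mathcalH d N s := by
  set S := Finset.univ.filter (fun K : (j : Fin d) → Fin (N j) => Lam d N K ≠ 0)
  set V : ℂ := ((∏ j, (N j : ℝ) : ℝ) : ℂ)
  have hre (K : (j : Fin d) → Fin (N j)) : 0 < (s ^ 2 + (Lam d N K : ℂ)).re := by
    simpa using add_pos_of_pos_of_nonneg hs (Lam_nonneg K)
  have hint (K) (_ : K ∈ S) := integrableOn_frullaniIntegrand (hre K)
  have hsum (t : ℝ) : ∑ K ∈ S, frullaniIntegrand (s ^ 2 + Lam d N K) t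
      = -(V * integrandI d s t + integrandH d N s t) :=
    sum_frullaniIntegrand_eq hN t
  have hI := integrableOn_integrandI (d := d) hs
  have hH : IntegrableOn (integrandH d N s) (Ioi 0) := by
    refine ((integrable_finsetSum S hint).neg.sub (hI.const_mul V)).congr (.of_forall fun t => ?_)
    simp only [Pi.neg_apply, Pi.sub_apply, hsum]
    ring
  calc ∑ K ∈ S, Complex.log (s ^ 2 + (Lam d N K : ℂ))
      = ∑ K ∈ S, ∫ t in Ioi (0:ℝ), frullaniIntegrand (s ^ 2 + Lam d N K) t :=
        Finset.sum_congr rfl fun K _ => log_eq_integral_frullaniIntegrand (hre K)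
    _ = ∫ t in Ioi (0:ℝ), -(V * integrandI d s t + integrandH d N s t) := by
        rw [← integral_finsetSum S hint, funext hsum]
    _ = V * mathcalI d s + mathcalH d N s := by
        rw [integral_neg, integral_add (hI.const_mul V) hH, integral_const_mul,
          mathcalI_eq_integral_integrandI, mathcalH_eq_integral_integrandH]
        ring

/-- `∑_{Λ_K ≠ 0} log(s² + Λ_K) = V(N)·𝓘_d(s) + 𝓗_N(s)` for `Re(s²) > 0`. -/
theorem log_det_identity (d : ℕ) (hd : 1 ≤ d) (N : Fin d → ℕ)
    (hN : ∀ j, 0 < N j) (s : ℂ) (hs : 0 < (s ^ 2).re) :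
    ∑ K ∈ Finset.univ.filter (fun K : (j : Fin d) → Fin (N j) => Lam d N K ≠ 0),
        Complex.log (s ^ 2 + ((Lam d N K : ℝ) : ℂ))
      = ((∏ j, (N j : ℝ) : ℝ) : ℂ) * mathcalI d s + mathcalH d N s :=
  log_det_identity_general d N hN s hs
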